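/- arXiv:2605.18530 — 5 statements merged into one kernel-verified Lean document; each statement's English description precedes it below -/
import Mathlib

section
/- Let γ₀ < γ₁ be real numbers and let w : [γ₀, γ₁] → ℝ be positive and continuous. Set κ := (1/2)∫_{γ₀}^{γ₁} w(γ) dγ. Then there exists a unique continuously differentiable, strictly increasing function γ* : [0,1] → [γ₀, γ₁] with γ*(0) = γ₀ and γ*(1) = γ₁ such that (1/2)·(γ*)'(t)·w(γ*(t)) = κ for all t ∈ [0,1]; consequently the per-timestep loss ℓ(t) := (1/2)·(γ*)'(t)·w(γ*(t)) is constant equal to κ ≥ 0 and has zero variance over t ∼ Uniform[0,1]. (Proposition: Constant Per-Timestep Diffusion Loss.) -/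
/-!
Extend `w` to a continuous weight `u` on `ℝ` that is bounded below by a positive constant, and let
`e` be a primitive of `u`; it is an order isomorphism of `ℝ`. For a schedule `g` with values in
`[γ₀, γ₁]` the loss equation says `(e ∘ g)' = 2κ = e γ₁ - e γ₀`, so `e ∘ g` must be the affine
map from `e γ₀` to `e γ₁`. This forces `g = e⁻¹ (e γ₀ + t (e γ₁ - e γ₀))`, and conversely this
schedule is `C¹` with derivative `2κ / w (g t)` by the inverse function theorem.
-/

open Set MeasureTheory intervalIntegral

theorem surjective_of_pos_le_deriv {f : ℝ → ℝ} {C : ℝ} (hf : Differentiable ℝ f) (hC : 0 < C)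
    (hf' : ∀ x, C ≤ deriv f x) : Function.Surjective f := by
  have hlin := mul_sub_le_image_sub_of_le_deriv hf hf'
  refine hf.continuous.surjective ?_ ?_
  · refine Filter.tendsto_atTop_mono' _ ?_
      (Filter.tendsto_atTop_add_const_left _ (f 0) (Filter.tendsto_id.const_mul_atTop hC))
    filter_upwards [Filter.eventually_ge_atTop 0] with x hx
    show f 0 + C * x ≤ f x
    linarith [hlin hx]
  · refine Filter.tendsto_atBot_mono' _ ?_
      (Filter.tendsto_atBot_add_const_left _ (f 0) (Filter.tendsto_id.const_mul_atBot hC))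
    filter_upwards [Filter.eventually_le_atBot 0] with x hx
    show f x ≤ f 0 + C * x
    linarith [hlin hx]

theorem exists_orderIso_hasDerivAt {u : ℝ → ℝ} {C : ℝ} (hu : Continuous u) (hC : 0 < C)
    (huC : ∀ x, C ≤ u x) : ∃ e : ℝ ≃o ℝ, ∀ x, HasDerivAt e (u x) x := by
  have hF : ∀ x, HasDerivAt (fun y => ∫ t in (0:ℝ)..y, u t) (u x) x := fun x =>
    (hu.integral_hasStrictDerivAt 0 x).hasDerivAt
  have hderiv : ∀ x, deriv (fun y => ∫ t in (0:ℝ)..y, u t) x = u x := fun x => (hF x).deriv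
  refine ⟨StrictMono.orderIsoOfSurjective _ ?_ ?_, hF⟩
  · exact strictMono_of_deriv_pos fun x => (hderiv x).symm ▸ hC.trans_le (huC x)
  · exact surjective_of_pos_le_deriv (fun x => (hF x).differentiableAt) hC
      fun x => (hderiv x).symm ▸ huC x

theorem ContinuousOn.exists_continuous_extension_of_pos {a b : ℝ} {w : ℝ → ℝ} (hab : a ≤ b)
    (hw : ContinuousOn w (Icc a b)) (hpos : ∀ x ∈ Icc a b, 0 < w x) :
    ∃ u : ℝ → ℝ, Continuous u ∧ EqOn u w (Icc a b) ∧ ∃ C, 0 < C ∧ ∀ x, C ≤ u x := by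
  obtain ⟨x₀, hx₀, hmin⟩ := isCompact_Icc.exists_isMinOn (nonempty_Icc.2 hab) hw
  refine ⟨IccExtend hab ((Icc a b).domRestrict w),
    continuous_IccExtend_iff.2 (continuousOn_iff_continuous_domRestrict.1 hw),
    fun x hx => IccExtend_of_mem hab _ hx, w x₀, hpos x₀ hx₀, fun x => ?_⟩
  rw [IccExtend_apply]
  exact hmin (projIcc a b hab x).2

theorem OrderIso.hasDerivAt_symm_of_hasDerivAt (e : ℝ ≃o ℝ) {u : ℝ → ℝ}
    (he : ∀ x, HasDerivAt e (u x) x) (hu : ∀ x, u x ≠ 0) (y : ℝ) :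
    HasDerivAt e.symm (u (e.symm y))⁻¹ y :=
  .of_local_left_inverse e.symm.continuous.continuousAt (he _) (hu _)
    (.of_forall e.apply_symm_apply)

noncomputable def optimalSchedule (e : ℝ ≃o ℝ) (a b t : ℝ) : ℝ :=
  e.symm (e a + t * (e b - e a))

section optimalSchedule

variable {e : ℝ ≃o ℝ} {u : ℝ → ℝ} {a b : ℝ}

@[simp] theorem optimalSchedule_zero : optimalSchedule e a b 0 = a := by
  simp [optimalSchedule]

@[simp] theorem optimalSchedule_one : optimalSchedule e a b 1 = b := by
  simp [optimalSchedule]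

theorem monotone_optimalSchedule (hab : a ≤ b) : Monotone (optimalSchedule e a b) :=
  e.symm.monotone.comp fun s t hst => by
    have := e.monotone hab
    gcongr

theorem strictMono_optimalSchedule (hab : a < b) : StrictMono (optimalSchedule e a b) :=
  e.symm.strictMono.comp fun s t hst => by
    have := e.strictMono hab
    gcongr

theorem mapsTo_optimalSchedule (hab : a ≤ b) : MapsTo (optimalSchedule e a b) (Icc 0 1) (Icc a b) :=
  fun _ ht => ⟨by simpa using monotone_optimalSchedule (e := e) hab ht.1,
    by simpa using monotone_optimalSchedule (e := e) hab ht.2⟩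

theorem hasDerivAt_optimalSchedule (he : ∀ x, HasDerivAt e (u x) x) (hu : ∀ x, u x ≠ 0) (t : ℝ) :
    HasDerivAt (optimalSchedule e a b) ((e b - e a) / u (optimalSchedule e a b t)) t := by
  have hlin : HasDerivAt (fun t => e a + t * (e b - e a)) (e b - e a) t := by
    simpa using ((hasDerivAt_id t).mul_const (e b - e a)).const_add (e a)
  rw [div_eq_inv_mul]
  exact (e.hasDerivAt_symm_of_hasDerivAt he hu _).comp t hlin

theorem contDiff_optimalSchedule (he : ∀ x, HasDerivAt e (u x) x) (hu_cont : Continuous u)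
    (hu : ∀ x, u x ≠ 0) : ContDiff ℝ 1 (optimalSchedule e a b) := by
  have hderiv := hasDerivAt_optimalSchedule (a := a) (b := b) he hu
  have hdiff : Differentiable ℝ (optimalSchedule e a b) := fun t => (hderiv t).differentiableAt
  refine contDiff_one_iff_deriv.2 ⟨hdiff, ?_⟩
  rw [funext fun t => (hderiv t).deriv]
  exact continuous_const.div (hu_cont.comp hdiff.continuous) fun t => hu _

end optimalSchedule

theorem eq_add_mul_of_mul_derivWithin_eq {W u g : ℝ → ℝ} {a b k : ℝ}
    (hW : ∀ x, HasDerivAt W (u x) x) (hg : DifferentiableOn ℝ g (Icc a b))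
    (hk : ∀ t ∈ Icc a b, u (g t) * derivWithin g (Icc a b) t = k) :
    ∀ t ∈ Icc a b, W (g t) = W (g a) + k * (t - a) := by
  have hderiv : ∀ t ∈ Ico a b, HasDerivWithinAt (W ∘ g) k (Ici t) t := fun t ht => by
    have hgt := (hg t (Ico_subset_Icc_self ht)).hasDerivWithinAt
    rw [← hk t (Ico_subset_Icc_self ht)]
    exact ((hW (g t)).comp_hasDerivWithinAt t hgt).mono_of_mem_nhdsWithin
      (Icc_mem_nhdsGE_of_mem ht)
  have hWcont : Continuous W := continuous_iff_continuousAt.2 fun x => (hW x).continuousAt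
  refine eq_of_has_deriv_right_eq hderiv (fun t _ => ?_) (hWcont.comp_continuousOn hg.continuousOn)
    (by fun_prop) (by simp)
  simpa using ((hasDerivAt_id t).sub_const a).const_mul k |>.const_add (W (g a)) |>.hasDerivWithinAt

/-- **Constant Per-Timestep Diffusion Loss.**
Let `γ₀ < γ₁` and let `w` be positive and continuous on `[γ₀, γ₁]`.
Set `κ := (1/2) ∫_{γ₀}^{γ₁} w`.  Then there exists a unique continuously
differentiable, strictly increasing schedule `γ* : [0,1] → [γ₀,γ₁]` with
`γ*(0) = γ₀`, `γ*(1) = γ₁` and `(1/2) (γ*)'(t) w(γ*(t)) = κ` for all `t ∈ [0,1]`;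
consequently the per-timestep loss `ℓ(t) = (1/2) (γ*)'(t) w(γ*(t))` is constantly
equal to `κ ≥ 0` and has zero variance over `t ∼ Uniform[0,1]`. -/
theorem constant_per_timestep_diffusion_loss
    (γ₀ γ₁ : ℝ) (hγ : γ₀ < γ₁) (w : ℝ → ℝ)
    (hw_pos : ∀ x ∈ Icc γ₀ γ₁, 0 < w x)
    (hw_cont : ContinuousOn w (Icc γ₀ γ₁))
    (κ : ℝ) (hκ : κ = (1 / 2) * ∫ x in γ₀..γ₁, w x)
    (IsSched : (ℝ → ℝ) → Prop)
    (hIsSched : ∀ g, IsSched g ↔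
      ContDiffOn ℝ 1 g (Icc (0:ℝ) 1) ∧
      StrictMonoOn g (Icc (0:ℝ) 1) ∧
      MapsTo g (Icc (0:ℝ) 1) (Icc γ₀ γ₁) ∧
      g 0 = γ₀ ∧ g 1 = γ₁ ∧
      ∀ t ∈ Icc (0:ℝ) 1,
        (1 / 2) * derivWithin g (Icc (0:ℝ) 1) t * w (g t) = κ) :
    (∃ γstar : ℝ → ℝ, IsSched γstar ∧
      -- the per-timestep loss is constant equal to κ ≥ 0 ...
      (∀ t ∈ Icc (0:ℝ) 1,
        (1 / 2) * derivWithin γstar (Icc (0:ℝ) 1) t * w (γstar t) = κ) ∧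
      0 ≤ κ ∧
      -- ... and has zero variance over t ∼ Uniform[0,1]
      (∫ t in (0:ℝ)..1,
        ((1 / 2) * derivWithin γstar (Icc (0:ℝ) 1) t * w (γstar t) - κ) ^ 2) = 0) ∧
    -- uniqueness: any two such schedules agree on [0,1]
    ∀ g₁ g₂ : ℝ → ℝ, IsSched g₁ → IsSched g₂ → EqOn g₁ g₂ (Icc (0:ℝ) 1) := by
  obtain ⟨u, hu_cont, hu_eq, C, hC, huC⟩ := hw_cont.exists_continuous_extension_of_pos hγ.le hw_pos
  have hu_ne : ∀ x, u x ≠ 0 := fun x => (hC.trans_le (huC x)).ne'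
  obtain ⟨e, he⟩ := exists_orderIso_hasDerivAt hu_cont hC huC
  have hk : e γ₁ - e γ₀ = 2 * κ := by
    rw [hκ, ← integral_eq_sub_of_hasDerivAt (fun x _ => he x) (hu_cont.intervalIntegrable _ _),
      integral_congr (hu_eq.mono (uIcc_of_le hγ.le).subset)]
    ring
  have hloss_iff : ∀ x ∈ Icc γ₀ γ₁, ∀ d, (1 / 2) * d * w x = κ ↔ u x * d = e γ₁ - e γ₀ := by
    intro x hx d
    rw [hk, hu_eq hx]
    constructor <;> intro h <;> linarith
  set γs := optimalSchedule e γ₀ γ₁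
  have hmaps : MapsTo γs (Icc 0 1) (Icc γ₀ γ₁) := mapsTo_optimalSchedule hγ.le
  have hloss : ∀ t ∈ Icc (0:ℝ) 1, (1 / 2) * derivWithin γs (Icc 0 1) t * w (γs t) = κ := by
    intro t ht
    rw [hloss_iff _ (hmaps ht),
      (hasDerivAt_optimalSchedule he hu_ne t).hasDerivWithinAt.derivWithin
        (uniqueDiffOn_Icc one_pos t ht),
      mul_div_cancel₀ _ (hu_ne _)]
  have hvar : ∫ t in (0:ℝ)..1, ((1 / 2) * derivWithin γs (Icc 0 1) t * w (γs t) - κ) ^ 2 = 0 := by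
    rw [integral_congr (g := fun _ => 0) fun t ht => ?_, intervalIntegral.integral_zero]
    rw [uIcc_of_le zero_le_one] at ht
    simp only [hloss t ht, sub_self]
    norm_num
  have hγs : IsSched γs := (hIsSched γs).2
    ⟨(contDiff_optimalSchedule he hu_cont hu_ne).contDiffOn,
      (strictMono_optimalSchedule hγ).strictMonoOn _, hmaps, optimalSchedule_zero,
      optimalSchedule_one, hloss⟩
  refine ⟨⟨γs, hγs, hloss, by linarith [e.strictMono hγ], hvar⟩, fun g₁ g₂ h₁ h₂ t ht => ?_⟩
  have hcoord : ∀ g, IsSched g → e (g t) = e γ₀ + (e γ₁ - e γ₀) * t := by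
    intro g hg
    obtain ⟨hcd, -, hgmaps, hg0, -, hgloss⟩ := (hIsSched g).1 hg
    simpa [hg0] using eq_add_mul_of_mul_derivWithin_eq he (hcd.differentiableOn one_ne_zero)
      (fun s hs => (hloss_iff _ (hgmaps hs) _).1 (hgloss s hs)) t ht
  exact e.injective ((hcoord g₁ h₁).trans (hcoord g₂ h₂).symm)
end

section
/- Let γ₀ < γ₁ be real numbers and w : [γ₀, γ₁] → ℝ continuous. For every strictly increasing C¹ function γ : [0,1] → [γ₀, γ₁] with γ(0) = γ₀ and γ(1) = γ₁, one has ∫₀¹ (1/2)·γ'(t)·w(γ(t)) dt = (1/2)∫_{γ₀}^{γ₁} w(γ) dγ. In particular, the expected diffusion loss E_{t∼Uniform[0,1]}[ℓ(t)] depends only on the endpoints γ₀, γ₁ and is invariant to the interior shape of the schedule γ. -/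
open Set MeasureTheory intervalIntegral

theorem integral_deriv_mul_comp_of_hasDerivWithinAt_Icc {a b : ℝ} (hab : a ≤ b)
    {γ γ' w : ℝ → ℝ} {s : Set ℝ}
    (hγ : ∀ t ∈ Icc a b, HasDerivWithinAt γ (γ' t) (Icc a b) t)
    (hγ' : ContinuousOn γ' (Icc a b)) (hw : ContinuousOn w s) (hmaps : MapsTo γ (Icc a b) s) :
    ∫ t in a..b, γ' t * w (γ t) = ∫ x in γ a..γ b, w x := by
  have hγ_cont : ContinuousOn γ (Icc a b) := fun t ht ↦ (hγ t ht).continuousWithinAt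
  have hγ_interior : ∀ t ∈ Ioo (min a b) (max a b), HasDerivWithinAt γ (γ' t) (Ioi t) t := by
    rw [min_eq_left hab, max_eq_right hab]
    exact fun t ht ↦ ((hγ t (Ioo_subset_Icc_self ht)).hasDerivAt
      (Icc_mem_nhds ht.1 ht.2)).hasDerivWithinAt
  rw [← uIcc_of_le hab] at hγ_cont hγ' hmaps
  exact integral_deriv_smul_comp'' hγ_cont hγ_interior hγ' (hw.mono hmaps.image_subset)

theorem expected_diffusion_loss_shape_invariant_general
    (γ₀ γ₁ : ℝ) (w : ℝ → ℝ)
    (hw_cont : ContinuousOn w (Icc γ₀ γ₁))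
    (γ γ' : ℝ → ℝ)
    (hC1 : ∀ t ∈ Icc (0:ℝ) 1, HasDerivWithinAt γ (γ' t) (Icc (0:ℝ) 1) t)
    (hγ'cont : ContinuousOn γ' (Icc (0:ℝ) 1))
    (hmaps : MapsTo γ (Icc (0:ℝ) 1) (Icc γ₀ γ₁))
    (h0 : γ 0 = γ₀) (h1 : γ 1 = γ₁) :
    ∫ t in (0:ℝ)..1, (1 / 2) * γ' t * w (γ t) = (1 / 2) * ∫ x in γ₀..γ₁, w x := by
  simp_rw [mul_assoc, intervalIntegral.integral_const_mul]
  rw [integral_deriv_mul_comp_of_hasDerivWithinAt_Icc zero_le_one hC1 hγ'cont hw_cont hmaps,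
    h0, h1]

/-- **Schedule-shape invariance of the expected diffusion loss.**
Let `γ₀ < γ₁` and `w` continuous on `[γ₀,γ₁]`.  For every strictly increasing C¹
schedule `γ : [0,1] → [γ₀,γ₁]` with `γ(0) = γ₀`, `γ(1) = γ₁` (with derivative `γ'`),
`∫₀¹ (1/2) γ'(t) w(γ(t)) dt = (1/2)∫_{γ₀}^{γ₁} w(x) dx`; in particular the expected
diffusion loss `E_{t∼U[0,1]}[ℓ(t)]` depends only on the endpoints. -/
theorem expected_diffusion_loss_shape_invariant
    (γ₀ γ₁ : ℝ) (hγ : γ₀ < γ₁) (w : ℝ → ℝ)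
    (hw_cont : ContinuousOn w (Icc γ₀ γ₁))
    (γ γ' : ℝ → ℝ)
    (hC1 : ∀ t ∈ Icc (0:ℝ) 1, HasDerivWithinAt γ (γ' t) (Icc (0:ℝ) 1) t)
    (hγ'cont : ContinuousOn γ' (Icc (0:ℝ) 1))
    (hmono : StrictMonoOn γ (Icc (0:ℝ) 1))
    (hmaps : MapsTo γ (Icc (0:ℝ) 1) (Icc γ₀ γ₁))
    (h0 : γ 0 = γ₀) (h1 : γ 1 = γ₁) :
    ∫ t in (0:ℝ)..1, (1 / 2) * γ' t * w (γ t) = (1 / 2) * ∫ x in γ₀..γ₁, w x :=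
  expected_diffusion_loss_shape_invariant_general γ₀ γ₁ w hw_cont γ γ' hC1 hγ'cont hmaps h0 h1
end

section
/- Let γ₀ < γ₁ be real numbers, w : [γ₀, γ₁] → ℝ positive and continuous, κ := (1/2)∫_{γ₀}^{γ₁} w(γ) dγ, and let γ* be the unique C¹ strictly increasing schedule on [0,1] with endpoints γ₀, γ₁ satisfying (1/2)·(γ*)'(t)·w(γ*(t)) = κ for all t. Then for every strictly increasing C¹ schedule γ : [0,1] → [γ₀, γ₁] with γ(0) = γ₀, γ(1) = γ₁, the variance Var_{t∼Uniform[0,1]}[(1/2)·γ'(t)·w(γ(t))] is nonnegative, and it equals zero if and only if γ = γ*. -/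
open Set MeasureTheory intervalIntegral

/-- **The constant-loss schedule is the unique variance minimizer.**
Let `γ₀ < γ₁`, `w` positive and continuous on `[γ₀,γ₁]`, `κ := (1/2)∫_{γ₀}^{γ₁} w`,
and let `γ*` be the C¹ strictly increasing schedule with endpoints `γ₀, γ₁` satisfying
`(1/2)(γ*)'(t) w(γ*(t)) = κ` for all `t ∈ [0,1]`.  Then for every strictly increasing
C¹ schedule `γ : [0,1] → [γ₀,γ₁]` with `γ(0) = γ₀`, `γ(1) = γ₁`, the variance
`Var_{t∼U[0,1]}[(1/2)γ'(t)w(γ(t))]` is nonnegative, and it is zero iff `γ = γ*`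
(on `[0,1]`). -/
theorem variance_nonneg_and_zero_iff_constant_schedule
    (γ₀ γ₁ : ℝ) (hγ : γ₀ < γ₁) (w : ℝ → ℝ)
    (hw_pos : ∀ x ∈ Icc γ₀ γ₁, 0 < w x)
    (hw_cont : ContinuousOn w (Icc γ₀ γ₁))
    (κ : ℝ) (hκ : κ = (1 / 2) * ∫ x in γ₀..γ₁, w x)
    -- the constant-loss schedule γ* (C¹, strictly increasing, correct endpoints)
    (γstar γstar' : ℝ → ℝ)
    (hsC1 : ∀ t ∈ Icc (0:ℝ) 1, HasDerivWithinAt γstar (γstar' t) (Icc (0:ℝ) 1) t)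
    (hs'cont : ContinuousOn γstar' (Icc (0:ℝ) 1))
    (hsmono : StrictMonoOn γstar (Icc (0:ℝ) 1))
    (hsmaps : MapsTo γstar (Icc (0:ℝ) 1) (Icc γ₀ γ₁))
    (hs0 : γstar 0 = γ₀) (hs1 : γstar 1 = γ₁)
    (hsconst : ∀ t ∈ Icc (0:ℝ) 1, (1 / 2) * γstar' t * w (γstar t) = κ)
    -- an arbitrary strictly increasing C¹ schedule γ with the same endpoints
    (γ γ' : ℝ → ℝ)
    (hC1 : ∀ t ∈ Icc (0:ℝ) 1, HasDerivWithinAt γ (γ' t) (Icc (0:ℝ) 1) t)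
    (hγ'cont : ContinuousOn γ' (Icc (0:ℝ) 1))
    (hmono : StrictMonoOn γ (Icc (0:ℝ) 1))
    (hmaps : MapsTo γ (Icc (0:ℝ) 1) (Icc γ₀ γ₁))
    (h0 : γ 0 = γ₀) (h1 : γ 1 = γ₁)
    -- the per-timestep loss of γ and its mean over t ∼ Uniform[0,1]
    (ℓ : ℝ → ℝ) (hℓ : ∀ t, ℓ t = (1 / 2) * γ' t * w (γ t))
    (m : ℝ) (hm : m = ∫ t in (0:ℝ)..1, ℓ t) :
    0 ≤ (∫ t in (0:ℝ)..1, (ℓ t - m) ^ 2) ∧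
    ((∫ t in (0:ℝ)..1, (ℓ t - m) ^ 2) = 0 ↔ EqOn γ γstar (Icc (0:ℝ) 1)) := by
  have h01 : (0:ℝ) ≤ 1 := zero_le_one
  have hIcc : uIcc (0:ℝ) 1 = Icc 0 1 := uIcc_of_le h01
  have hcγ : ContinuousOn γ (Icc (0:ℝ) 1) := fun t ht => (hC1 t ht).continuousWithinAt
  have hℓcont : ContinuousOn ℓ (Icc (0:ℝ) 1) := by
    have : ℓ = fun t => (1/2) * γ' t * w (γ t) := funext hℓ
    rw [this]
    exact (continuousOn_const.mul hγ'cont).mul (hw_cont.comp hcγ hmaps)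
  have hfint : IntervalIntegrable (fun t => (ℓ t - m)^2) volume 0 1 := by
    apply ContinuousOn.intervalIntegrable
    rw [hIcc]
    exact (hℓcont.sub continuousOn_const).pow 2
  have hnonneg : 0 ≤ ∫ t in (0:ℝ)..1, (ℓ t - m)^2 :=
    intervalIntegral.integral_nonneg h01 (fun u _ => sq_nonneg _)
  -- change of variables for a generic schedule
  have subst : ∀ (f f' : ℝ → ℝ),
      (∀ t ∈ Icc (0:ℝ) 1, HasDerivWithinAt f (f' t) (Icc (0:ℝ) 1) t) →
      ContinuousOn f' (Icc (0:ℝ) 1) → MapsTo f (Icc (0:ℝ) 1) (Icc γ₀ γ₁) →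
      ∀ t ∈ Icc (0:ℝ) 1, (∫ x in (0:ℝ)..t, w (f x) * f' x) = ∫ u in (f 0)..(f t), w u := by
    intro f f' hf hf' hmapsf t ht
    have hsub : uIcc (0:ℝ) t ⊆ Icc (0:ℝ) 1 := by
      rw [uIcc_of_le ht.1]
      exact Icc_subset_Icc le_rfl ht.2
    have h2 : ∀ x ∈ Ioo (min (0:ℝ) t) (max 0 t), HasDerivWithinAt f (f' x) (Ioi x) x := by
      intro x hx
      rw [min_eq_left ht.1, max_eq_right ht.1] at hx
      have hx1 : x < 1 := lt_of_lt_of_le hx.2 ht.2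
      refine (hf x ⟨hx.1.le, hx1.le⟩).mono_of_mem_nhdsWithin ?_
      refine mem_nhdsWithin.mpr ⟨Iio 1, isOpen_Iio, hx1, fun y hy => ⟨(hx.1.trans hy.2).le, hy.1.le⟩⟩
    have := integral_comp_mul_deriv'' (f := f) (f' := f') (g := w)
      (fun s hs => (hf s (hsub hs)).continuousWithinAt.mono hsub) h2 (hf'.mono hsub)
      (hw_cont.mono (by
        rintro y ⟨x, hx, rfl⟩
        exact hmapsf (hsub hx)))
    simpa [Function.comp] using this
  -- injectivity of x ↦ ∫_{γ₀}^x w on [γ₀, γ₁]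
  have hWint : ∀ u ∈ Icc γ₀ γ₁, ∀ v ∈ Icc γ₀ γ₁, IntervalIntegrable w volume u v := by
    intro u hu v hv
    apply ContinuousOn.intervalIntegrable
    exact hw_cont.mono (uIcc_subset_Icc hu hv)
  have hWmono : ∀ u ∈ Icc γ₀ γ₁, ∀ v ∈ Icc γ₀ γ₁, u < v →
      (∫ x in γ₀..u, w x) < (∫ x in γ₀..v, w x) := by
    intro u hu v hv huv
    have hpos : 0 < ∫ x in u..v, w x := by
      refine intervalIntegral_pos_of_pos_on (hWint u hu v hv) (fun x hx => ?_) huv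
      exact hw_pos x ⟨hu.1.trans hx.1.le, hx.2.le.trans hv.2⟩
    have hadd := integral_add_adjacent_intervals (μ := volume) (f := w)
      (hWint γ₀ (left_mem_Icc.mpr hγ.le) u hu) (hWint u hu v hv)
    linarith
  have hWinj : ∀ u ∈ Icc γ₀ γ₁, ∀ v ∈ Icc γ₀ γ₁,
      (∫ x in γ₀..u, w x) = (∫ x in γ₀..v, w x) → u = v := by
    intro u hu v hv he
    rcases lt_trichotomy u v with h | h | h
    · exact absurd he (ne_of_lt (hWmono u hu v hv h))
    · exact h
    · exact absurd he.symm (ne_of_lt (hWmono v hv u hu h))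
  -- the γ* side: ∫_{γ₀}^{γ*(t)} w = 2κt
  have key2 : ∀ t ∈ Icc (0:ℝ) 1, (∫ u in γ₀..γstar t, w u) = 2 * κ * t := by
    intro t ht
    have h1 := subst γstar γstar' hsC1 hs'cont hsmaps t ht
    rw [hs0] at h1
    rw [← h1]
    have hcongr : EqOn (fun x => w (γstar x) * γstar' x) (fun _ => 2 * κ) (uIcc 0 t) := by
      intro x hx
      have hx' : x ∈ Icc (0:ℝ) 1 := by
        rw [uIcc_of_le ht.1] at hx
        exact ⟨hx.1, hx.2.trans ht.2⟩
      have := hsconst x hx'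
      simp only
      linarith
    rw [intervalIntegral.integral_congr hcongr, intervalIntegral.integral_const, smul_eq_mul]
    ring
  refine ⟨hnonneg, ?_, ?_⟩
  · -- variance zero → γ = γ* on [0,1]
    intro hvar
    have hae : (fun t => (ℓ t - m)^2) =ᵐ[volume.restrict (Ioc (0:ℝ) 1)] 0 :=
      (integral_eq_zero_iff_of_le_of_nonneg_ae h01
        (Filter.Eventually.of_forall fun x => sq_nonneg _) hfint).1 hvar
    have hℓae : ∀ᵐ x ∂(volume : Measure ℝ), x ∈ Ioc (0:ℝ) 1 → ℓ x = m := by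
      rw [← ae_restrict_iff' measurableSet_Ioc]
      filter_upwards [hae] with x hx
      have hx0 : (ℓ x - m)^2 = 0 := hx
      have := pow_eq_zero_iff (two_ne_zero) |>.mp hx0
      linarith [sub_eq_zero.mp this]
    have key1 : ∀ t ∈ Icc (0:ℝ) 1, (∫ u in γ₀..γ t, w u) = 2 * m * t := by
      intro t ht
      have h1 := subst γ γ' hC1 hγ'cont hmaps t ht
      rw [h0] at h1
      rw [← h1]
      have : (∫ x in (0:ℝ)..t, w (γ x) * γ' x) = ∫ x in (0:ℝ)..t, (2 * m : ℝ) := by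
        apply intervalIntegral.integral_congr_ae
        rw [uIoc_of_le ht.1]
        filter_upwards [hℓae] with x hx hxt
        have hx1 : x ∈ Ioc (0:ℝ) 1 := ⟨hxt.1, hxt.2.trans ht.2⟩
        have hℓx := hℓ x
        have := hx hx1
        linarith
      rw [this, intervalIntegral.integral_const, smul_eq_mul]
      ring
    have hmκ : m = κ := by
      have e1 := key1 1 (right_mem_Icc.mpr h01)
      rw [h1] at e1
      rw [hκ]
      linarith
    intro t ht
    exact hWinj (γ t) (hmaps ht) (γstar t) (hsmaps ht)
      (by rw [key1 t ht, key2 t ht, hmκ])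
  · -- γ = γ* on [0,1] → variance zero
    intro heq
    have hderiv_eq : ∀ t ∈ Icc (0:ℝ) 1, γ' t = γstar' t := by
      intro t ht
      have h1 : HasDerivWithinAt γ (γstar' t) (Icc (0:ℝ) 1) t :=
        (hsC1 t ht).congr (fun y hy => heq hy) (heq ht)
      exact (uniqueDiffOn_Icc_zero_one t ht).eq_deriv _ (hC1 t ht) h1
    have hℓκ : ∀ t ∈ Icc (0:ℝ) 1, ℓ t = κ := by
      intro t ht
      rw [hℓ t, hderiv_eq t ht, heq ht]
      exact hsconst t ht
    have hmκ : m = κ := by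
      rw [hm, intervalIntegral.integral_congr (g := fun _ => κ)
        (fun x hx => hℓκ x (hIcc ▸ hx)), intervalIntegral.integral_const, smul_eq_mul]
      ring
    have hz : EqOn (fun t => (ℓ t - m)^2) (fun _ => (0:ℝ)) (uIcc (0:ℝ) 1) := by
      intro x hx
      simp only
      rw [hℓκ x (hIcc ▸ hx), hmκ]
      ring
    rw [intervalIntegral.integral_congr hz]
    simp
end

section
/- Let w₁, w₂, … be independent identically distributed, strictly positive, integrable real random variables such that log((w₁ + ⋯ + w_K)/K) is integrable for every K ≥ 1. Define the importance-weighted estimator L_K := E[log((w₁ + ⋯ + w_K)/K)]. Then L_K is monotonically non-decreasing in K, i.e., L_K ≤ L_{K+1} for every K ≥ 1, and L_K ≤ log E[w₁] for every K ≥ 1. (Monotone tightening of the importance-weighted autoencoder (IWAE) bound.) -/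
/-!
Write `S = w₀ + ⋯ + w_K`. The sample mean `S / (K + 1)` is the average over `j ≤ K` of the
leave-one-out means `(S - w_j) / K`, so by concavity of `log` its logarithm dominates the average
of their logarithms. For an i.i.d. sequence, swapping `j` and `K` does not change the joint law, so
each `(S - w_j) / K` is distributed as `(w₀ + ⋯ + w_{K-1}) / K`; taking expectations gives
`L_K ≤ L_{K+1}`. The bound `L_K ≤ log E[w₀]` is Jensen's inequality for `log`, the sample mean
having expectation `E[w₀]`.
-/

open MeasureTheory ProbabilityTheory Finset

theorem Real.sum_log_sum_sub_div_le {ι : Type*} {s : Finset ι} {n : ℕ} (hn : 0 < n)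
    (hs : #s = n + 1) {x : ι → ℝ} (hx : ∀ i ∈ s, 0 < x i) :
    ∑ j ∈ s, Real.log (((∑ i ∈ s, x i) - x j) / n) ≤
      (n + 1) * Real.log ((∑ i ∈ s, x i) / (n + 1)) := by
  classical
  have hloo_pos : ∀ j ∈ s, 0 < ((∑ i ∈ s, x i) - x j) / n := by
    intro j hj
    rw [← sum_erase_eq_sub hj]
    refine div_pos (sum_pos (fun i hi => hx i (mem_of_mem_erase hi)) ?_) (by exact_mod_cast hn)
    rw [← card_pos, card_erase_of_mem hj, hs]
    exact hn
  have hjensen := strictConcaveOn_log_Ioi.concaveOn.le_map_sum (t := s)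
    (w := fun _ => 1 / ((n : ℝ) + 1)) (p := fun j => ((∑ i ∈ s, x i) - x j) / n)
    (fun _ _ => by positivity)
    (by rw [sum_const, hs, nsmul_eq_mul]; push_cast; field_simp) hloo_pos
  have hmean : ∑ j ∈ s, (1 / ((n : ℝ) + 1)) • (((∑ i ∈ s, x i) - x j) / n)
      = (∑ i ∈ s, x i) / (n + 1) := by
    simp only [smul_eq_mul, ← mul_sum, ← sum_div, sum_sub_distrib, sum_const, hs, nsmul_eq_mul]
    push_cast
    field_simp
    ring
  rw [hmean, ← smul_sum, smul_eq_mul] at hjensen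
  rwa [div_mul_eq_mul_div, one_mul, div_le_iff₀' (by positivity)] at hjensen

theorem Finset.sum_range_comp_swap {M : Type*} [AddCommGroup M] (f : ℕ → M) {j n : ℕ}
    (hj : j ≤ n) :
    ∑ i ∈ range n, f (Equiv.swap j n i) = ∑ i ∈ range (n + 1), f i - f j := by
  have hperm : ∑ i ∈ range (n + 1), f (Equiv.swap j n i) = ∑ i ∈ range (n + 1), f i := by
    refine Equiv.Perm.sum_comp _ _ _ fun i hi => ?_
    have := Equiv.swap_apply_ne_self_iff.1 hi
    simp only [coe_range, Set.mem_Iio]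
    omega
  rw [← hperm, sum_range_succ, Equiv.swap_apply_right, add_sub_cancel_right]

section
variable {Ω : Type*} {mΩ : MeasurableSpace Ω} {P : Measure Ω}

theorem ProbabilityTheory.iIndepFun.identDistrib_comp_perm {ι β : Type*} [Countable ι]
    [MeasurableSpace β] {X : ι → Ω → β} (hindep : iIndepFun X P) {i₀ : ι}
    (hident : ∀ i, IdentDistrib (X i) (X i₀) P P) (σ : Equiv.Perm ι) :
    IdentDistrib (fun ω i => X (σ i) ω) (fun ω i => X i ω) P P :=
  .pi (fun i => (hident (σ i)).trans (hident i).symm) (hindep.precomp σ.injective) hindep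

theorem ProbabilityTheory.iIndepFun.identDistrib_sum_range_sub {w : ℕ → Ω → ℝ}
    (hindep : iIndepFun w P) (hident : ∀ i, IdentDistrib (w i) (w 0) P P) {j n : ℕ}
    (hj : j ≤ n) :
    IdentDistrib (fun ω => (∑ i ∈ range (n + 1), w i ω) - w j ω)
      (fun ω => ∑ i ∈ range n, w i ω) P P := by
  have := (hindep.identDistrib_comp_perm hident (Equiv.swap j n)).comp
    (u := fun x : ℕ → ℝ => ∑ i ∈ range n, x i) (by fun_prop)
  simp only [Function.comp_def] at this
  convert this using 2 with ω
  exact (sum_range_comp_swap (fun i => w i ω) hj).symm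

theorem integral_log_le_log_integral [IsProbabilityMeasure P] {X : Ω → ℝ}
    (hX : Integrable X P) (hlogX : Integrable (fun ω => Real.log (X ω)) P)
    (hpos : ∀ᵐ ω ∂P, 0 < X ω) :
    ∫ ω, Real.log (X ω) ∂P ≤ Real.log (∫ ω, X ω ∂P) := by
  set m := ∫ ω, X ω ∂P
  have hm : 0 < m := by
    rw [integral_pos_iff_support_of_nonneg_ae (hpos.mono fun ω h => h.le) hX,
      measure_congr (show Function.support X =ᵐ[P] Set.univ from
        hpos.mono fun ω h => eq_true h.ne')]
    simp
  have htangent : ∀ᵐ ω ∂P, Real.log (X ω) ≤ Real.log m + (X ω / m - 1) := by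
    filter_upwards [hpos] with ω h
    have := Real.log_le_sub_one_of_pos (div_pos h hm)
    rw [Real.log_div h.ne' hm.ne'] at this
    linarith
  have hlin : Integrable (fun ω => X ω / m - 1) P := (hX.div_const m).sub (integrable_const 1)
  calc ∫ ω, Real.log (X ω) ∂P ≤ ∫ ω, Real.log m + (X ω / m - 1) ∂P :=
        integral_mono_ae hlogX ((integrable_const _).add hlin) htangent
    _ = Real.log m := by
        rw [integral_add (integrable_const _) hlin,
          integral_sub (hX.div_const m) (integrable_const 1), integral_div, div_self hm.ne']
        simp

theorem ProbabilityTheory.iIndepFun.integral_log_sum_range_div_le_succ {w : ℕ → Ω → ℝ}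
    (hindep : iIndepFun w P) (hident : ∀ i, IdentDistrib (w i) (w 0) P P)
    (hpos : ∀ i ω, 0 < w i ω) {n : ℕ} (hn : 0 < n)
    (hlog : Integrable (fun ω => Real.log ((∑ i ∈ range n, w i ω) / n)) P)
    (hlog_succ : Integrable
      (fun ω => Real.log ((∑ i ∈ range (n + 1), w i ω) / ((n + 1 : ℕ) : ℝ))) P) :
    ∫ ω, Real.log ((∑ i ∈ range n, w i ω) / n) ∂P ≤
      ∫ ω, Real.log ((∑ i ∈ range (n + 1), w i ω) / ((n + 1 : ℕ) : ℝ)) ∂P := by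
  have hloo : ∀ j ∈ range (n + 1),
      IdentDistrib (fun ω => Real.log (((∑ i ∈ range (n + 1), w i ω) - w j ω) / n))
        (fun ω => Real.log ((∑ i ∈ range n, w i ω) / n)) P P := fun j hj =>
    (hindep.identDistrib_sum_range_sub hident (Nat.lt_succ_iff.1 (mem_range.1 hj))).comp
      (u := fun x => Real.log (x / n)) (by fun_prop)
  have hloo_int : ∀ j ∈ range (n + 1),
      Integrable (fun ω => Real.log (((∑ i ∈ range (n + 1), w i ω) - w j ω) / n)) P :=
    fun j hj => (hloo j hj).integrable_iff.2 hlog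
  have hjensen : ∀ ω,
      ∑ j ∈ range (n + 1), Real.log (((∑ i ∈ range (n + 1), w i ω) - w j ω) / n) ≤
        ((n + 1 : ℕ) : ℝ) *
          Real.log ((∑ i ∈ range (n + 1), w i ω) / ((n + 1 : ℕ) : ℝ)) := by
    intro ω
    push_cast
    exact Real.sum_log_sum_sub_div_le hn (card_range _) fun i _ => hpos i ω
  refine le_of_mul_le_mul_left ?_ (show (0 : ℝ) < (n + 1 : ℕ) by positivity)
  calc ((n + 1 : ℕ) : ℝ) * ∫ ω, Real.log ((∑ i ∈ range n, w i ω) / n) ∂P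
      = ∑ j ∈ range (n + 1),
          ∫ ω, Real.log (((∑ i ∈ range (n + 1), w i ω) - w j ω) / n) ∂P := by
        rw [sum_congr rfl fun j hj => (hloo j hj).integral_eq, sum_const, card_range,
          nsmul_eq_mul]
    _ = ∫ ω, ∑ j ∈ range (n + 1),
          Real.log (((∑ i ∈ range (n + 1), w i ω) - w j ω) / n) ∂P :=
        (integral_finsetSum _ hloo_int).symm
    _ ≤ ∫ ω, ((n + 1 : ℕ) : ℝ) *
          Real.log ((∑ i ∈ range (n + 1), w i ω) / ((n + 1 : ℕ) : ℝ)) ∂P :=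
        integral_mono (integrable_finsetSum _ hloo_int) (hlog_succ.const_mul _) hjensen
    _ = _ := integral_const_mul _ _

theorem integral_sum_range_div_eq_of_identDistrib [IsProbabilityMeasure P] {w : ℕ → Ω → ℝ}
    (hident : ∀ i, IdentDistrib (w i) (w 0) P P) (hint : Integrable (w 0) P) {n : ℕ}
    (hn : n ≠ 0) :
    ∫ ω, (∑ i ∈ range n, w i ω) / n ∂P = ∫ ω, w 0 ω ∂P := by
  have hwint : ∀ i ∈ range n, Integrable (w i) P := fun i _ => (hident i).integrable_iff.2 hint
  rw [integral_div, integral_finsetSum _ hwint, sum_congr rfl fun i _ => (hident i).integral_eq,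
    sum_const, card_range, nsmul_eq_mul, mul_div_cancel_left₀ _ (Nat.cast_ne_zero.2 hn)]

end

/-- **Monotone tightening of the IWAE bound.**
Let `w₁, w₂, …` be i.i.d. strictly positive integrable real random variables such
that `log((w₁ + ⋯ + w_K)/K)` is integrable for every `K ≥ 1`.  With
`L_K := E[log((w₁ + ⋯ + w_K)/K)]`, one has `L_K ≤ L_{K+1}` for every `K ≥ 1` and
`L_K ≤ log E[w₁]` for every `K ≥ 1`. -/
theorem iwae_bound_monotone
    {Ω : Type*} {mΩ : MeasurableSpace Ω} (P : Measure Ω) [IsProbabilityMeasure P]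
    (w : ℕ → Ω → ℝ)
    (hindep : iIndepFun w P)
    (hident : ∀ i : ℕ, IdentDistrib (w i) (w 0) P P)
    (hpos : ∀ i : ℕ, ∀ ω, 0 < w i ω)
    (hint : Integrable (w 0) P)
    (hlogint : ∀ K : ℕ, 1 ≤ K →
      Integrable (fun ω => Real.log ((∑ k ∈ range K, w k ω) / K)) P)
    (L : ℕ → ℝ)
    (hL : ∀ K : ℕ, L K = ∫ ω, Real.log ((∑ k ∈ range K, w k ω) / K) ∂P) :
    (∀ K : ℕ, 1 ≤ K → L K ≤ L (K + 1)) ∧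
    (∀ K : ℕ, 1 ≤ K → L K ≤ Real.log (∫ ω, w 0 ω ∂P)) := by
  refine ⟨fun K hK => ?_, fun K hK => ?_⟩
  · rw [hL, hL]
    exact hindep.integral_log_sum_range_div_le_succ hident hpos hK (hlogint K hK)
      (hlogint (K + 1) K.succ_pos)
  · have hmean_int : Integrable (fun ω => (∑ k ∈ range K, w k ω) / K) P :=
      (integrable_finsetSum _ fun i _ => (hident i).integrable_iff.2 hint).div_const _
    have hmean_pos : ∀ ω, 0 < (∑ k ∈ range K, w k ω) / K := fun ω =>
      div_pos (sum_pos (fun i _ => hpos i ω) (nonempty_range_iff.2 (by omega))) (by positivity)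
    rw [hL, ← integral_sum_range_div_eq_of_identDistrib hident hint (by omega : K ≠ 0)]
    exact integral_log_le_log_integral hmean_int (hlogint K hK) (ae_of_all _ hmean_pos)
end

section
/- Let α, σ : [0,1] → (0, ∞) be differentiable and fix ê ∈ ℝ^n. Let z : [0,1] → ℝ^n be differentiable and solve the linearized probability-flow ODE z'(t) = (σ'(t)/σ(t))·z(t) + (α'(t) − α(t)·σ'(t)/σ(t))·ê on [0,1]. Then the implied noise prediction (z(t) − α(t)·ê)/σ(t) is constant in t; in particular, for any s, t ∈ [0,1], z(s) = α(s)·ê + σ(s)·(z(t) − α(t)·ê)/σ(t). Hence the DDIM update z_s = α_s·ê_θ + σ_s·ε̂_θ is the exact solution of the probability-flow ODE linearized at the fixed clean-data prediction ê, for any step size. -/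
open Set

/-
Along a solution of the linearized probability-flow ODE, the implied noise prediction
`ε(t) = σ(t)⁻¹ (z(t) - α(t) ê)` has derivative
`σ⁻¹ (z' - α' ê) - σ' σ⁻² (z - α ê)`, and substituting the ODE for `z'` makes the two terms
cancel. A function with vanishing derivative on the interval is constant there, and solving
`ε(s) = ε(t)` for `z(s)` is the DDIM update.
-/

theorem Convex.eq_of_forall_hasDerivWithinAt_zero {E : Type*} [NormedAddCommGroup E]
    [NormedSpace ℝ E] {f : ℝ → E} {s : Set ℝ} (hs : Convex ℝ s)
    (hf : ∀ x ∈ s, HasDerivWithinAt f 0 s x) {x y : ℝ} (hx : x ∈ s) (hy : y ∈ s) :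
    f x = f y := by
  have h := hs.norm_image_sub_le_of_norm_hasDerivWithin_le hf (C := 0) (by simp) hy hx
  rwa [zero_mul, norm_le_zero_iff, sub_eq_zero] at h

section ImpliedNoise

variable {E : Type*} [NormedAddCommGroup E] [NormedSpace ℝ E]

noncomputable def impliedNoise (α σ : ℝ → ℝ) (z : ℝ → E) (e : E) (t : ℝ) : E :=
  (σ t)⁻¹ • (z t - α t • e)

theorem hasDerivWithinAt_impliedNoise_zero {α σ : ℝ → ℝ} {z : ℝ → E} {e : E}
    {α' σ' : ℝ} {s : Set ℝ} {t : ℝ} (hσt : σ t ≠ 0)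
    (hα : HasDerivWithinAt α α' s t) (hσ : HasDerivWithinAt σ σ' s t)
    (hz : HasDerivWithinAt z ((σ' / σ t) • z t + (α' - α t * σ' / σ t) • e) s t) :
    HasDerivWithinAt (impliedNoise α σ z e) 0 s t := by
  refine ((hσ.inv hσt).smul (hz.sub (hα.smul_const e))).congr_deriv ?_
  simp only [Pi.inv_apply, Pi.sub_apply]
  match_scalars <;> field_simp <;> ring

theorem eq_add_smul_of_inv_smul_sub_eq {σ : ℝ} (hσ : σ ≠ 0) {x a c : E}
    (h : σ⁻¹ • (x - a) = c) : x = a + σ • c := by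
  rw [← h, smul_inv_smul₀ hσ, add_sub_cancel]

end ImpliedNoise

theorem ddim_exact_for_linearized_pfode_general
    {n : ℕ} (α σ α' σ' : ℝ → ℝ)
    (hσ_pos : ∀ t ∈ Icc (0:ℝ) 1, 0 < σ t)
    (hα : ∀ t ∈ Icc (0:ℝ) 1, HasDerivWithinAt α (α' t) (Icc (0:ℝ) 1) t)
    (hσ : ∀ t ∈ Icc (0:ℝ) 1, HasDerivWithinAt σ (σ' t) (Icc (0:ℝ) 1) t)
    (ehat : Fin n → ℝ) (z : ℝ → (Fin n → ℝ))
    (hz : ∀ t ∈ Icc (0:ℝ) 1,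
      HasDerivWithinAt z
        ((σ' t / σ t) • z t + (α' t - α t * σ' t / σ t) • ehat)
        (Icc (0:ℝ) 1) t) :
    ∀ s ∈ Icc (0:ℝ) 1, ∀ t ∈ Icc (0:ℝ) 1,
      (σ s)⁻¹ • (z s - α s • ehat) = (σ t)⁻¹ • (z t - α t • ehat) ∧
      z s = α s • ehat + (σ s * (σ t)⁻¹) • (z t - α t • ehat) := by
  intro s hs t ht
  have hconst : (σ s)⁻¹ • (z s - α s • ehat) = (σ t)⁻¹ • (z t - α t • ehat) :=
    (convex_Icc 0 1).eq_of_forall_hasDerivWithinAt_zero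
      (fun u hu => hasDerivWithinAt_impliedNoise_zero (hσ_pos u hu).ne' (hα u hu) (hσ u hu)
        (hz u hu)) hs ht
  refine ⟨hconst, ?_⟩
  rw [mul_smul]
  exact eq_add_smul_of_inv_smul_sub_eq (hσ_pos s hs).ne' hconst

/-- **DDIM exactly solves the PFODE linearized at a fixed clean-data prediction.**
Let `α, σ : [0,1] → (0,∞)` be differentiable and fix `ê ∈ ℝⁿ`.  If `z : [0,1] → ℝⁿ`
solves `z'(t) = (σ'(t)/σ(t)) z(t) + (α'(t) - α(t) σ'(t)/σ(t)) ê`, then the implied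
noise prediction `(z(t) - α(t) ê)/σ(t)` is constant in `t`; in particular, for any
`s, t ∈ [0,1]`, `z(s) = α(s) ê + σ(s) (z(t) - α(t) ê)/σ(t)`, i.e., the DDIM update
`z_s = α_s ê + σ_s ε̂` is the exact solution for any step size. -/
theorem ddim_exact_for_linearized_pfode
    {n : ℕ} (α σ α' σ' : ℝ → ℝ)
    (hα_pos : ∀ t ∈ Icc (0:ℝ) 1, 0 < α t)
    (hσ_pos : ∀ t ∈ Icc (0:ℝ) 1, 0 < σ t)
    (hα : ∀ t ∈ Icc (0:ℝ) 1, HasDerivWithinAt α (α' t) (Icc (0:ℝ) 1) t)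
    (hσ : ∀ t ∈ Icc (0:ℝ) 1, HasDerivWithinAt σ (σ' t) (Icc (0:ℝ) 1) t)
    (ehat : Fin n → ℝ) (z : ℝ → (Fin n → ℝ))
    (hz : ∀ t ∈ Icc (0:ℝ) 1,
      HasDerivWithinAt z
        ((σ' t / σ t) • z t + (α' t - α t * σ' t / σ t) • ehat)
        (Icc (0:ℝ) 1) t) :
    ∀ s ∈ Icc (0:ℝ) 1, ∀ t ∈ Icc (0:ℝ) 1,
      (σ s)⁻¹ • (z s - α s • ehat) = (σ t)⁻¹ • (z t - α t • ehat) ∧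
      z s = α s • ehat + (σ s * (σ t)⁻¹) • (z t - α t • ehat) :=
  ddim_exact_for_linearized_pfode_general α σ α' σ' hσ_pos hα hσ ehat z hz
end
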